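/- arXiv:1605.01793 — 4 statements merged into one kernel-verified Lean document; each statement's English description precedes it below -/
import Mathlib

section
/- Let α₀ > 1 and α ∈ (0,1). Let (p_n)_{n≥1} be nonnegative reals with Σ_{n≥1} p_n = 1 and p_n ≤ C_p·n^{-(1+α₀)} for all n ≥ 1. Let (a_n)_{n≥0} be nonnegative reals with a₀ > 0 and c_a·n^{-α₀} ≤ a_n ≤ C_a·n^{-α₀} for all n ≥ 1, where 0 < c_a ≤ C_a. Define δ₀ = a₀ and recursively δ_n = a_n + α·Σ_{l=1}^{n} p_l·δ_{n−l} for n ≥ 1. Then there exist constants 0 < c₁ ≤ c₂ such that c₁·n^{-α₀} ≤ δ_n ≤ c₂·n^{-α₀} for every integer n ≥ 1. -/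
/-!
Put `u n = n ^ α₀ * δ n`. The lower bound is immediate from `δ n ≥ a n`. For the upper bound the
key estimate is that convolving `p` with `n ^ (-α₀)` costs almost nothing:
`n ^ α₀ * ∑_{0<l<n} p l * (n - l) ^ (-α₀) ≤ 1 + K / n`. Terms with `l ≤ n / 2` are controlled by
convexity of `y ↦ y ^ α₀` on `[1, 2]`, the others by `p l = O(n ^ (-1-α₀))` and the convergence of
`∑ k ^ (-α₀)`. Hence `u n ≤ A + α (1 + K / n) sup_{k<n} u k`, and since `α < 1` the factor
`α (1 + K / n)` is eventually below `(1 + α) / 2 < 1`, which keeps `u` bounded.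
-/

open Finset Filter Topology

namespace Real

theorem rpow_le_one_add_of_mem_Icc {s y : ℝ} (hs : 1 ≤ s) (hy₁ : 1 ≤ y) (hy₂ : y ≤ 2) :
    y ^ s ≤ 1 + (2 ^ s - 1) * (y - 1) := by
  have h := (convexOn_rpow hs).2 (Set.mem_Ici.2 zero_le_one) (Set.mem_Ici.2 zero_le_two)
    (show 0 ≤ 2 - y by linarith) (show 0 ≤ y - 1 by linarith) (by ring)
  simp only [smul_eq_mul, one_rpow, mul_one, show 2 - y + (y - 1) * 2 = y by ring] at h
  linarith

theorem div_sub_rpow_le {s x y : ℝ} (hs : 1 ≤ s) (hx : 0 ≤ x) (hxy : 2 * x ≤ y) (hy : 0 < y) :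
    (y / (y - x)) ^ s ≤ 1 + 2 ^ (s + 1) * x / y := by
  have hyx : 0 < y - x := by linarith
  have h₁ : 1 ≤ y / (y - x) := by rw [le_div_iff₀ hyx]; linarith
  have h₂ : y / (y - x) ≤ 2 := by rw [div_le_iff₀ hyx]; linarith
  have h₃ : y / (y - x) - 1 ≤ 2 * x / y := by
    rw [div_sub_one hyx.ne', div_le_div_iff₀ hyx hy]; nlinarith
  have h2s : 1 ≤ (2 : ℝ) ^ s := one_le_rpow one_le_two (by linarith)
  calc (y / (y - x)) ^ s ≤ 1 + (2 ^ s - 1) * (y / (y - x) - 1) :=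
        rpow_le_one_add_of_mem_Icc hs h₁ h₂
    _ ≤ 1 + 2 ^ s * (2 * x / y) := by gcongr; linarith
    _ = 1 + 2 ^ (s + 1) * x / y := by rw [rpow_add_one two_ne_zero]; ring

/-- For `2 x ≤ y` the term is `q` up to `O(x q / y)`; for `2 x > y` it is `O((y - x) ^ (-s) / y)`. -/
theorem rpow_mul_mul_sub_rpow_le {s C q x y : ℝ} (hs : 1 ≤ s) (hx : 0 < x) (hxy : x < y)
    (hq : 0 ≤ q) (hqC : q ≤ C * x ^ (-(1 + s))) :
    y ^ s * (q * (y - x) ^ (-s)) ≤ q + 2 ^ (s + 1) * C / y * (x ^ (-s) + (y - x) ^ (-s)) := by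
  have hy : 0 < y := hx.trans hxy
  have hyx : 0 < y - x := sub_pos.2 hxy
  have hC : 0 ≤ C := nonneg_of_mul_nonneg_left (hq.trans hqC) (by positivity)
  rcases le_or_gt (2 * x) y with hnear | hfar
  · have hxq : x * q ≤ C * x ^ (-s) := by
      calc x * q ≤ x * (C * x ^ (-(1 + s))) := by gcongr
        _ = C * x ^ (-s) := by
          rw [show -(1 + s) = -1 + -s by ring, rpow_add hx, rpow_neg_one]
          field_simp
    calc y ^ s * (q * (y - x) ^ (-s)) = q * (y / (y - x)) ^ s := by
          rw [div_rpow hy.le hyx.le, rpow_neg hyx.le]; ring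
      _ ≤ q * (1 + 2 ^ (s + 1) * x / y) := by gcongr; exact div_sub_rpow_le hs hx.le hnear hy
      _ = q + 2 ^ (s + 1) / y * (x * q) := by ring
      _ ≤ q + 2 ^ (s + 1) / y * (C * x ^ (-s)) := by gcongr
      _ = q + 2 ^ (s + 1) * C / y * x ^ (-s) := by ring
      _ ≤ q + 2 ^ (s + 1) * C / y * (x ^ (-s) + (y - x) ^ (-s)) := by
          gcongr
          exact le_add_of_nonneg_right (by positivity)
  · have hqy : q ≤ 2 ^ (s + 1) * C * y ^ (-(1 + s)) := by
      calc q ≤ C * x ^ (-(1 + s)) := hqC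
        _ ≤ C * (y / 2) ^ (-(1 + s)) :=
          mul_le_mul_of_nonneg_left
            (rpow_le_rpow_of_nonpos (by positivity) (by linarith) (by linarith)) hC
        _ = 2 ^ (s + 1) * C * y ^ (-(1 + s)) := by
          rw [div_rpow hy.le zero_le_two, rpow_neg zero_le_two, div_inv_eq_mul, add_comm 1 s]
          ring
    calc y ^ s * (q * (y - x) ^ (-s))
        ≤ y ^ s * (2 ^ (s + 1) * C * y ^ (-(1 + s)) * (y - x) ^ (-s)) := by gcongr
      _ = 2 ^ (s + 1) * C / y * (y - x) ^ (-s) := by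
          rw [show -(1 + s) = -1 + -s by ring, rpow_add hy, rpow_neg_one, rpow_neg hy.le]
          field_simp
      _ ≤ q + 2 ^ (s + 1) * C / y * (x ^ (-s) + (y - x) ^ (-s)) := by
          have : 0 ≤ 2 ^ (s + 1) * C / y * x ^ (-s) := by positivity
          linarith

end Real

theorem exists_rpow_mul_sum_mul_sub_rpow_le {s C : ℝ} (hs : 1 < s) {p : ℕ → ℝ}
    (hp : ∀ n, 0 ≤ p n) (hpC : ∀ n : ℕ, 1 ≤ n → p n ≤ C * (n : ℝ) ^ (-(1 + s))) :
    ∃ K, ∀ n : ℕ, (n : ℝ) ^ s * ∑ l ∈ Ioo 0 n, p l * ((n - l : ℕ) : ℝ) ^ (-s)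
      ≤ ∑ l ∈ Ioo 0 n, p l + K / n := by
  set ζ := ∑' k : ℕ, (k : ℝ) ^ (-s)
  have hζ : Summable fun k : ℕ => (k : ℝ) ^ (-s) := Real.summable_nat_rpow.2 (by linarith)
  have hC : 0 ≤ C := by simpa using (hp 1).trans (hpC 1 le_rfl)
  refine ⟨2 ^ (s + 2) * C * ζ, fun n => ?_⟩
  have hterm : ∀ l ∈ Ioo 0 n, (n : ℝ) ^ s * (p l * ((n - l : ℕ) : ℝ) ^ (-s))
      ≤ p l + 2 ^ (s + 1) * C / n * ((l : ℝ) ^ (-s) + ((n - l : ℕ) : ℝ) ^ (-s)) := by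
    intro l hl
    rw [mem_Ioo] at hl
    rw [Nat.cast_sub hl.2.le]
    exact Real.rpow_mul_mul_sub_rpow_le hs.le (by exact_mod_cast hl.1) (by exact_mod_cast hl.2)
      (hp l) (hpC l hl.1)
  have hsum : ∑ l ∈ Ioo 0 n, (l : ℝ) ^ (-s) ≤ ζ :=
    hζ.sum_le_tsum _ fun _ _ => by positivity
  have hsum' : ∑ l ∈ Ioo 0 n, ((n - l : ℕ) : ℝ) ^ (-s) ≤ ζ := by
    rw [← sum_image (f := fun k : ℕ => (k : ℝ) ^ (-s)) fun x hx y hy h => by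
      simp only [mem_coe, mem_Ioo] at hx hy; omega]
    exact hζ.sum_le_tsum _ fun _ _ => by positivity
  calc (n : ℝ) ^ s * ∑ l ∈ Ioo 0 n, p l * ((n - l : ℕ) : ℝ) ^ (-s)
      ≤ ∑ l ∈ Ioo 0 n, (p l + 2 ^ (s + 1) * C / n * ((l : ℝ) ^ (-s) + ((n - l : ℕ) : ℝ) ^ (-s))) := by
        rw [mul_sum]; exact sum_le_sum hterm
    _ = ∑ l ∈ Ioo 0 n, p l + 2 ^ (s + 1) * C / n *
          (∑ l ∈ Ioo 0 n, (l : ℝ) ^ (-s) + ∑ l ∈ Ioo 0 n, ((n - l : ℕ) : ℝ) ^ (-s)) := by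
        rw [sum_add_distrib, ← mul_sum, sum_add_distrib]
    _ ≤ ∑ l ∈ Ioo 0 n, p l + 2 ^ (s + 1) * C / n * (ζ + ζ) := by gcongr
    _ = ∑ l ∈ Ioo 0 n, p l + 2 ^ (s + 2) * C * ζ / n := by
        rw [Real.rpow_add two_pos, Real.rpow_add two_pos]; norm_num; ring

theorem exists_forall_le_of_eventually_le_add_mul {u : ℕ → ℝ} {A θ : ℝ} (hθ : θ < 1)
    (h : ∀ᶠ n in atTop, ∀ B, (∀ k < n, u k ≤ B) → u n ≤ A + θ * B) : ∃ B, ∀ n, u n ≤ B := by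
  obtain ⟨N, hN⟩ := eventually_atTop.1 h
  set B := max (A / (1 - θ)) (∑ k ∈ range N, |u k|)
  refine ⟨B, fun n => ?_⟩
  induction n using Nat.strong_induction_on with
  | _ n ih =>
    rcases lt_or_ge n N with hn | hn
    · calc u n ≤ |u n| := le_abs_self _
        _ ≤ ∑ k ∈ range N, |u k| := single_le_sum (fun k _ => abs_nonneg (u k)) (mem_range.2 hn)
        _ ≤ B := le_max_right _ _
    · have hAB : A ≤ (1 - θ) * B := (div_le_iff₀' (sub_pos.2 hθ)).1 (le_max_left _ _)
      linarith [hN n hn B ih]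

section Renewal

variable {p a δ : ℕ → ℝ} {α : ℝ}

theorem renewal_nonneg (hp : ∀ n, 0 ≤ p n) (ha : ∀ n, 0 ≤ a n) (hα : 0 ≤ α) (hδ₀ : 0 ≤ δ 0)
    (hδ : ∀ n : ℕ, 1 ≤ n → δ n = a n + α * ∑ l ∈ Icc 1 n, p l * δ (n - l)) (n : ℕ) :
    0 ≤ δ n := by
  induction n using Nat.strong_induction_on with
  | _ n ih =>
    rcases Nat.eq_zero_or_pos n with rfl | hn
    · exact hδ₀
    · rw [hδ n hn]
      have hsum : 0 ≤ ∑ l ∈ Icc 1 n, p l * δ (n - l) :=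
        sum_nonneg fun l hl => mul_nonneg (hp l) (ih _ (by rw [mem_Icc] at hl; omega))
      exact add_nonneg (ha n) (mul_nonneg hα hsum)

theorem le_renewal (hp : ∀ n, 0 ≤ p n) (hα : 0 ≤ α) (hδ_nonneg : ∀ n, 0 ≤ δ n)
    (hδ : ∀ n : ℕ, 1 ≤ n → δ n = a n + α * ∑ l ∈ Icc 1 n, p l * δ (n - l)) {n : ℕ} (hn : 1 ≤ n) :
    a n ≤ δ n := by
  rw [hδ n hn]
  have : 0 ≤ ∑ l ∈ Icc 1 n, p l * δ (n - l) :=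
    sum_nonneg fun l _ => mul_nonneg (hp l) (hδ_nonneg _)
  linarith [mul_nonneg hα this]

theorem renewal_eq_add_mul_add (hδ : ∀ n : ℕ, 1 ≤ n → δ n = a n + α * ∑ l ∈ Icc 1 n, p l * δ (n - l))
    {n : ℕ} (hn : 1 ≤ n) :
    δ n = a n + α * (p n * δ 0 + ∑ l ∈ Ioo 0 n, p l * δ (n - l)) := by
  rw [hδ n hn, show Icc 1 n = insert n (Ioo 0 n) by rw [Ioo_insert_right (by omega)]; rfl,
    sum_insert (by simp), Nat.sub_self]

theorem rpow_mul_renewal_le {s C_p C_a K B : ℝ} (hs : 0 < s) (hα : 0 ≤ α) (hp : ∀ n, 0 ≤ p n)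
    (hpC : ∀ n : ℕ, 1 ≤ n → p n ≤ C_p * (n : ℝ) ^ (-(1 + s)))
    (hau : ∀ n : ℕ, 1 ≤ n → a n ≤ C_a * (n : ℝ) ^ (-s)) (hδ₀ : 0 ≤ δ 0)
    (hδ : ∀ n : ℕ, 1 ≤ n → δ n = a n + α * ∑ l ∈ Icc 1 n, p l * δ (n - l))
    {n : ℕ} (hn : 1 ≤ n)
    (hK : (n : ℝ) ^ s * ∑ l ∈ Ioo 0 n, p l * ((n - l : ℕ) : ℝ) ^ (-s) ≤ 1 + K / n)
    (hB : ∀ k < n, (k : ℝ) ^ s * δ k ≤ B) :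
    (n : ℝ) ^ s * δ n ≤ C_a + α * C_p * δ 0 + α * (1 + K / n) * B := by
  have hn₀ : (0 : ℝ) < n := by exact_mod_cast hn
  have hns : (n : ℝ) ^ s * (n : ℝ) ^ (-s) = 1 := by
    rw [← Real.rpow_add hn₀, add_neg_cancel, Real.rpow_zero]
  have hB₀ : 0 ≤ B := by simpa [Real.zero_rpow hs.ne'] using hB 0 hn
  have hCp : 0 ≤ C_p := by simpa using (hp 1).trans (hpC 1 le_rfl)
  have ha : (n : ℝ) ^ s * a n ≤ C_a := by
    calc (n : ℝ) ^ s * a n ≤ (n : ℝ) ^ s * (C_a * (n : ℝ) ^ (-s)) := by gcongr; exact hau n hn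
      _ = C_a := by rw [mul_left_comm, hns, mul_one]
  have hpn : (n : ℝ) ^ s * p n ≤ C_p := by
    calc (n : ℝ) ^ s * p n ≤ (n : ℝ) ^ s * (C_p * (n : ℝ) ^ (-(1 + s))) := by
          gcongr; exact hpC n hn
      _ = C_p * (n : ℝ)⁻¹ := by
          rw [show -(1 + s) = -1 + -s by ring, Real.rpow_add hn₀, Real.rpow_neg_one]
          linear_combination C_p * (n : ℝ)⁻¹ * hns
      _ ≤ C_p := mul_le_of_le_one_right hCp (inv_le_one_of_one_le₀ (by exact_mod_cast hn))
  have hconv : ∑ l ∈ Ioo 0 n, p l * δ (n - l)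
      ≤ B * ∑ l ∈ Ioo 0 n, p l * ((n - l : ℕ) : ℝ) ^ (-s) := by
    rw [mul_sum]
    refine sum_le_sum fun l hl => ?_
    rw [mem_Ioo] at hl
    have hnl : (0 : ℝ) < (n - l : ℕ) := by exact_mod_cast Nat.sub_pos_of_lt hl.2
    have : δ (n - l) ≤ B * ((n - l : ℕ) : ℝ) ^ (-s) := by
      rw [Real.rpow_neg hnl.le, ← div_eq_mul_inv, le_div_iff₀' (by positivity)]
      exact hB _ (by omega)
    calc p l * δ (n - l) ≤ p l * (B * ((n - l : ℕ) : ℝ) ^ (-s)) := by gcongr; exact hp l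
      _ = B * (p l * ((n - l : ℕ) : ℝ) ^ (-s)) := by ring
  calc (n : ℝ) ^ s * δ n
      = (n : ℝ) ^ s * a n + α * ((n : ℝ) ^ s * p n * δ 0
          + (n : ℝ) ^ s * ∑ l ∈ Ioo 0 n, p l * δ (n - l)) := by
        rw [renewal_eq_add_mul_add hδ hn]; ring
    _ ≤ C_a + α * (C_p * δ 0 + B * (1 + K / n)) := by
        have : (n : ℝ) ^ s * ∑ l ∈ Ioo 0 n, p l * δ (n - l) ≤ B * (1 + K / n) :=
          calc (n : ℝ) ^ s * ∑ l ∈ Ioo 0 n, p l * δ (n - l)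
              ≤ (n : ℝ) ^ s * (B * ∑ l ∈ Ioo 0 n, p l * ((n - l : ℕ) : ℝ) ^ (-s)) := by gcongr
            _ ≤ B * (1 + K / n) := by rw [mul_left_comm]; gcongr
        gcongr
    _ = C_a + α * C_p * δ 0 + α * (1 + K / n) * B := by ring

theorem renewal_exists_le_mul_rpow {s C_p C_a : ℝ} (hs : 1 < s) (hα : 0 ≤ α) (hα₁ : α < 1)
    (hp : ∀ n, 0 ≤ p n) (hp₁ : ∀ n, ∑ l ∈ Ioo 0 n, p l ≤ 1)
    (hpC : ∀ n : ℕ, 1 ≤ n → p n ≤ C_p * (n : ℝ) ^ (-(1 + s)))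
    (hau : ∀ n : ℕ, 1 ≤ n → a n ≤ C_a * (n : ℝ) ^ (-s)) (hδ₀ : 0 ≤ δ 0)
    (hδ : ∀ n : ℕ, 1 ≤ n → δ n = a n + α * ∑ l ∈ Icc 1 n, p l * δ (n - l)) :
    ∃ B, ∀ n : ℕ, 1 ≤ n → δ n ≤ B * (n : ℝ) ^ (-s) := by
  obtain ⟨K, hK⟩ := exists_rpow_mul_sum_mul_sub_rpow_le hs hp hpC
  have hθ : ∀ᶠ n : ℕ in atTop, α * (1 + K / n) ≤ (1 + α) / 2 := by
    have : Tendsto (fun n : ℕ => α * (1 + K / n)) atTop (𝓝 (α * (1 + 0))) :=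
      ((tendsto_const_div_atTop_nhds_zero_nat K).const_add 1).const_mul α
    exact this.eventually (ge_mem_nhds (by linarith))
  obtain ⟨B, hB⟩ := exists_forall_le_of_eventually_le_add_mul (u := fun n => (n : ℝ) ^ s * δ n)
    (A := C_a + α * C_p * δ 0) (θ := (1 + α) / 2) (by linarith) (by
      filter_upwards [hθ, eventually_ge_atTop 1] with n hθn hn B hu
      have hB₀ : 0 ≤ B := by simpa [Real.zero_rpow (by linarith : s ≠ 0)] using hu 0 hn
      calc (n : ℝ) ^ s * δ n ≤ C_a + α * C_p * δ 0 + α * (1 + K / n) * B :=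
            rpow_mul_renewal_le (by linarith) hα hp hpC hau hδ₀ hδ hn
              ((hK n).trans (by gcongr; exact hp₁ n)) hu
        _ ≤ C_a + α * C_p * δ 0 + (1 + α) / 2 * B := by gcongr)
  refine ⟨B, fun n hn => ?_⟩
  have hn₀ : (0 : ℝ) < n := by exact_mod_cast hn
  rw [Real.rpow_neg hn₀.le, ← div_eq_mul_inv, le_div_iff₀' (by positivity)]
  exact hB n

end Renewal

theorem statement2_general (α₀ α : ℝ) (hα₀ : 1 < α₀) (hα : α ∈ Set.Ioo (0 : ℝ) 1)
    (p : ℕ → ℝ) (hp : ∀ n, 0 ≤ p n) (hpsum : ∑' n : ℕ, p (n + 1) = 1)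
    (C_p : ℝ)
    (hpC : ∀ n : ℕ, 1 ≤ n → p n ≤ C_p * (n : ℝ) ^ (-(1 + α₀)))
    (a : ℕ → ℝ) (ha : ∀ n, 0 ≤ a n)
    (c_a C_a : ℝ) (hca : 0 < c_a)
    (hal : ∀ n : ℕ, 1 ≤ n → c_a * (n : ℝ) ^ (-α₀) ≤ a n)
    (hau : ∀ n : ℕ, 1 ≤ n → a n ≤ C_a * (n : ℝ) ^ (-α₀))
    (δ : ℕ → ℝ) (hδ0 : δ 0 = a 0)
    (hδ : ∀ n : ℕ, 1 ≤ n → δ n = a n + α * ∑ l ∈ Finset.Icc 1 n, p l * δ (n - l)) :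
    ∃ c₁ c₂ : ℝ, 0 < c₁ ∧ c₁ ≤ c₂ ∧
      ∀ n : ℕ, 1 ≤ n →
        c₁ * (n : ℝ) ^ (-α₀) ≤ δ n ∧ δ n ≤ c₂ * (n : ℝ) ^ (-α₀) := by
  have hδ₀ : 0 ≤ δ 0 := hδ0 ▸ ha 0
  have hp_summable : Summable fun n => p (n + 1) :=
    .of_nonneg_of_le (fun n => hp _) (fun n => hpC (n + 1) (by omega))
      (((summable_nat_add_iff 1).2 (Real.summable_nat_rpow.2 (by linarith))).mul_left C_p)
  have hp₁ : ∀ n, ∑ l ∈ Ioo 0 n, p l ≤ 1 := fun n =>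
    calc ∑ l ∈ Ioo 0 n, p l ≤ ∑ l ∈ range n, p (l + 1) := by
          rw [range_eq_Ico, sum_Ico_add' p]
          exact sum_le_sum_of_subset_of_nonneg (fun x hx => by simp only [mem_Ioo, mem_Ico] at hx ⊢; omega)
            fun i _ _ => hp i
      _ ≤ 1 := hpsum ▸ hp_summable.sum_le_tsum _ fun i _ => hp _
  obtain ⟨B, hB⟩ := renewal_exists_le_mul_rpow hα₀ hα.1.le hα.2 hp hp₁ hpC hau hδ₀ hδ
  have hδ_nonneg := renewal_nonneg hp ha hα.1.le hδ₀ hδ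
  refine ⟨c_a, max c_a B, hca, le_max_left _ _, fun n hn => ⟨?_, ?_⟩⟩
  · exact (hal n hn).trans (le_renewal hp hα.1.le hδ_nonneg hδ hn)
  · exact (hB n hn).trans (by gcongr; exact le_max_right _ _)

/-- Renewal-type recursion estimate: if `Σ_{n≥1} p_n = 1` with `p_n = O(n^{-(1+α₀)})`,
`a_n ≍ n^{-α₀}` with `a₀ > 0`, `α ∈ (0,1)`, and `δ₀ = a₀`,
`δ_n = a_n + α Σ_{l=1}^n p_l δ_{n-l}` for `n ≥ 1`, then `δ_n ≍ n^{-α₀}`. -/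
theorem statement2 (α₀ α : ℝ) (hα₀ : 1 < α₀) (hα : α ∈ Set.Ioo (0 : ℝ) 1)
    (p : ℕ → ℝ) (hp : ∀ n, 0 ≤ p n) (hpsum : ∑' n : ℕ, p (n + 1) = 1)
    (C_p : ℝ) (hCp : 0 < C_p)
    (hpC : ∀ n : ℕ, 1 ≤ n → p n ≤ C_p * (n : ℝ) ^ (-(1 + α₀)))
    (a : ℕ → ℝ) (ha : ∀ n, 0 ≤ a n) (ha0 : 0 < a 0)
    (c_a C_a : ℝ) (hca : 0 < c_a) (hcaCa : c_a ≤ C_a)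
    (hal : ∀ n : ℕ, 1 ≤ n → c_a * (n : ℝ) ^ (-α₀) ≤ a n)
    (hau : ∀ n : ℕ, 1 ≤ n → a n ≤ C_a * (n : ℝ) ^ (-α₀))
    (δ : ℕ → ℝ) (hδ0 : δ 0 = a 0)
    (hδ : ∀ n : ℕ, 1 ≤ n → δ n = a n + α * ∑ l ∈ Finset.Icc 1 n, p l * δ (n - l)) :
    ∃ c₁ c₂ : ℝ, 0 < c₁ ∧ c₁ ≤ c₂ ∧
      ∀ n : ℕ, 1 ≤ n →
        c₁ * (n : ℝ) ^ (-α₀) ≤ δ n ∧ δ n ≤ c₂ * (n : ℝ) ^ (-α₀) :=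
  statement2_general α₀ α hα₀ hα p hp hpsum C_p hpC a ha c_a C_a hca hal hau δ hδ0 hδ
end

section
/- Let α ∈ (0,1), α₀ > 1, and let (p_n)_{n≥1} be nonnegative reals with Σ_{n≥1} p_n = 1 and p_n ≤ C·n^{-(1+α₀)} for all n ≥ 1. Define q₀ = 1 and q_n = α·Σ_{k=0}^{n−1} p_{n−k}·q_k for n ≥ 1 (so the q_n are the Taylor coefficients of (1 − α·p(z))^{-1}). Then q_n ≥ α·p_n ≥ 0 for every n ≥ 1, Σ_{n≥0} q_n = 1/(1−α), and there exists a constant C₁ > 0 such that q_n ≤ C₁·n^{-(1+α₀)} for every n ≥ 1. -/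
/-!
Summing the recursion gives `Σ q = 1 + α (Σ_{n≥1} p_n) (Σ q)`. Read on partial sums, by strong
induction, this bounds them by `1/(1-α)`; for the full sums (a Cauchy product) it gives
`Σ q = 1/(1-α)`.

For the decay `n^{-β}` with `β = 1 + α₀`, write `q_n = α Σ_{j<n} p_{j+1} q_{n-1-j}` and induct
on `n` with a constant `K` to be chosen. Let `η = (1-α)/4` and fix `m` with
`Σ_{j<m} p_{j+1} ≥ 1 - η 2^{-β}`. For large `n`, the indices `j < m` contribute at most
`α(1+η) K n^{-β}`, because `(n-m)^{-β} ≤ (1+η) n^{-β}`; the indices `m ≤ j < n/2` contribute at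
most `α η K n^{-β}`; and the indices `j ≥ n/2` contribute at most `α C 2^β n^{-β} Σ q`, because
there `p_{j+1} ≤ C 2^β n^{-β}`. Since `α(1+2η) ≤ 1 - 2η`, the induction closes once
`2ηK ≥ α C 2^β Σ q`. Small `n` are handled by `q_n ≤ Σ q`.
-/

open Finset Filter Topology

theorem Finset.sum_mul_le_sum_mul_of_le {ι : Type*} {s : Finset ι} {f g : ι → ℝ} {b : ℝ}
    (hf : ∀ i ∈ s, 0 ≤ f i) (hg : ∀ i ∈ s, g i ≤ b) :
    ∑ i ∈ s, f i * g i ≤ (∑ i ∈ s, f i) * b := by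
  rw [sum_mul]
  exact sum_le_sum fun i hi => mul_le_mul_of_nonneg_left (hg i hi) (hf i hi)

theorem Real.rpow_neg_le_two_rpow_mul {β x y : ℝ} (hβ : 0 ≤ β) (hy : 0 < y) (hx : y / 2 ≤ x) :
    x ^ (-β) ≤ 2 ^ β * y ^ (-β) :=
  calc x ^ (-β) ≤ (y / 2) ^ (-β) := Real.rpow_le_rpow_of_nonpos (by positivity) hx (by linarith)
    _ = 2 ^ β * y ^ (-β) := by
      rw [Real.div_rpow hy.le zero_le_two, Real.rpow_neg zero_le_two, div_inv_eq_mul, mul_comm]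

theorem Real.one_le_rpow_mul_rpow_neg {β x y : ℝ} (hβ : 0 ≤ β) (hx : 0 < x) (hxy : x ≤ y) :
    1 ≤ y ^ β * x ^ (-β) := by
  rw [Real.rpow_neg hx.le, ← div_eq_mul_inv, one_le_div (by positivity)]
  exact Real.rpow_le_rpow hx.le hxy hβ

theorem eventually_sub_rpow_neg_le (β : ℝ) (m : ℕ) {δ : ℝ} (hδ : 0 < δ) :
    ∀ᶠ n : ℕ in atTop, ((n : ℝ) - m) ^ (-β) ≤ (1 + δ) * (n : ℝ) ^ (-β) := by
  have hlim : Tendsto (fun n : ℕ => (1 - m / n : ℝ) ^ (-β)) atTop (𝓝 1) := by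
    simpa using ((tendsto_const_div_atTop_nhds_zero_nat (m : ℝ)).const_sub 1).rpow_const
      (Or.inl (by norm_num))
  filter_upwards [hlim.eventually (gt_mem_nhds (by linarith : (1 : ℝ) < 1 + δ)),
    eventually_gt_atTop m] with n hclose hmn
  have hmn' : (m : ℝ) < n := by exact_mod_cast hmn
  have hn : (0 : ℝ) < n := by linarith [(m.cast_nonneg : (0 : ℝ) ≤ m)]
  have hfac : 0 ≤ 1 - (m : ℝ) / n := by rw [sub_nonneg, div_le_one hn]; exact hmn'.le
  rw [show (n : ℝ) - m = n * (1 - m / n) by field_simp, Real.mul_rpow hn.le hfac, mul_comm]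
  gcongr

def RenewalRecursion (α : ℝ) (p q : ℕ → ℝ) : Prop :=
  ∀ n : ℕ, 1 ≤ n → q n = α * ∑ k ∈ range n, p (n - k) * q k

section Renewal

variable {α : ℝ} {p q : ℕ → ℝ}

theorem renewal_succ (hq : RenewalRecursion α p q) (m : ℕ) :
    q (m + 1) = α * ∑ j ∈ range (m + 1), p (j + 1) * q (m - j) := by
  rw [hq (m + 1) m.succ_pos, ← sum_range_reflect]
  congr 1
  refine sum_congr rfl fun j hj => ?_
  have := mem_range.mp hj
  congr 2
  omega

theorem renewal_nonneg_s4 (hα : 0 ≤ α) (hp : ∀ n, 0 ≤ p n) (hq0 : q 0 = 1)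
    (hq : RenewalRecursion α p q) (n : ℕ) : 0 ≤ q n := by
  induction n using Nat.strong_induction_on with
  | _ n ih =>
    rcases Nat.eq_zero_or_pos n with rfl | hn
    · exact hq0 ▸ zero_le_one
    · rw [hq n hn]
      exact mul_nonneg hα (sum_nonneg fun k hk => mul_nonneg (hp _) (ih k (mem_range.mp hk)))

theorem mul_le_renewal (hα : 0 ≤ α) (hp : ∀ n, 0 ≤ p n) (hq0 : q 0 = 1)
    (hq : RenewalRecursion α p q) {n : ℕ} (hn : 1 ≤ n) :
    α * p n ≤ q n := by
  have hterm : p n ≤ ∑ k ∈ range n, p (n - k) * q k := by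
    simpa [hq0] using single_le_sum (f := fun k => p (n - k) * q k)
      (fun k _ => mul_nonneg (hp _) (renewal_nonneg_s4 hα hp hq0 hq k)) (mem_range.mpr hn)
  exact (hq n hn).symm ▸ mul_le_mul_of_nonneg_left hterm hα

theorem sum_range_succ_renewal (hq0 : q 0 = 1)
    (hq : RenewalRecursion α p q) (N : ℕ) :
    ∑ n ∈ range (N + 1), q n = 1 + α * ∑ j ∈ range N, p (j + 1) * ∑ i ∈ range (N - j), q i := by
  rw [sum_range_succ', hq0, add_comm]
  simp_rw [renewal_succ hq, ← mul_sum, sum_range_diag_flip N fun j i => p (j + 1) * q i, mul_sum]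

theorem sum_range_renewal_le (hα : 0 ≤ α) (hα1 : α < 1) (hp : ∀ n, 0 ≤ p n)
    (hP : ∀ N, ∑ j ∈ range N, p (j + 1) ≤ 1) (hq0 : q 0 = 1)
    (hq : RenewalRecursion α p q) (N : ℕ) :
    ∑ n ∈ range N, q n ≤ (1 - α)⁻¹ := by
  have h1α : 0 < 1 - α := by linarith
  induction N using Nat.strong_induction_on with
  | _ N ih =>
    rcases N with _ | N
    · simpa using h1α.le
    · have hconv : ∑ j ∈ range N, p (j + 1) * ∑ i ∈ range (N - j), q i ≤ 1 * (1 - α)⁻¹ :=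
        (sum_mul_le_sum_mul_of_le (fun j _ => hp _) fun j _ => ih _ (by omega)).trans
          (mul_le_mul_of_nonneg_right (hP N) (inv_nonneg.mpr h1α.le))
      calc ∑ n ∈ range (N + 1), q n ≤ 1 + α * (1 * (1 - α)⁻¹) := by
            rw [sum_range_succ_renewal hq0 hq]; gcongr
        _ = (1 - α)⁻¹ := by field_simp; ring

theorem hasSum_renewal (hα : 0 ≤ α) (hα1 : α < 1) (hp : ∀ n, 0 ≤ p n)
    (hP : HasSum (fun n => p (n + 1)) 1) (hq0 : q 0 = 1)
    (hq : RenewalRecursion α p q) :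
    HasSum q (1 - α)⁻¹ := by
  have hq_nonneg := renewal_nonneg_s4 hα hp hq0 hq
  have hsq : Summable q := summable_of_sum_range_le hq_nonneg
    (sum_range_renewal_le hα hα1 hp (fun N => sum_le_hasSum _ (fun i _ => hp _) hP) hq0 hq)
  have hshift : ∑' n, q (n + 1) = α * ∑' n, q n := by
    simp_rw [renewal_succ hq]
    rw [tsum_mul_left, ← hP.summable.tsum_mul_tsum_eq_tsum_sum_range hsq
      (hP.summable.mul_of_nonneg hsq (fun _ => hp _) hq_nonneg), hP.tsum_eq, one_mul]
  have hS : (∑' n, q n) * (1 - α) = 1 := by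
    linarith [hsq.tsum_eq_zero_add, hq0, hshift]
  exact eq_inv_of_mul_eq_one_left hS ▸ hsq.hasSum

theorem renewal_le_split (hα : 0 ≤ α) (hp : ∀ n, 0 ≤ p n) (hq_nonneg : ∀ n, 0 ≤ q n)
    (hq : RenewalRecursion α p q) {β C K : ℝ} (hβ : 0 ≤ β) (hC : 0 ≤ C)
    (hpC : ∀ n : ℕ, 1 ≤ n → p n ≤ C * (n : ℝ) ^ (-β)) (hK : 0 ≤ K) {m n : ℕ} (hmn : 2 * m < n)
    (ih : ∀ k, 1 ≤ k → k < n → q k ≤ K * (k : ℝ) ^ (-β)) :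
    q n ≤ α * ((∑ j ∈ range m, p (j + 1)) * (K * ((n : ℝ) - m) ^ (-β))
      + (∑ j ∈ Ico m (n / 2), p (j + 1)) * (K * (2 ^ β * (n : ℝ) ^ (-β)))
      + C * (2 ^ β * (n : ℝ) ^ (-β)) * ∑ i ∈ range n, q i) := by
  have hn : (0 : ℝ) < n := by exact_mod_cast (show 0 < n by omega)
  have hrec : q n = α * ∑ j ∈ range n, p (j + 1) * q (n - 1 - j) := by
    simpa [Nat.sub_add_cancel (show 1 ≤ n by omega)] using renewal_succ hq (n - 1)
  rw [hrec, ← sum_range_add_sum_Ico _ (show n / 2 ≤ n by omega),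
    ← sum_range_add_sum_Ico _ (show m ≤ n / 2 by omega)]
  refine mul_le_mul_of_nonneg_left (add_le_add (add_le_add ?_ ?_) ?_) hα
  · refine sum_mul_le_sum_mul_of_le (fun j _ => hp _) fun j hj => ?_
    have hj := mem_range.mp hj
    have hcast : (n : ℝ) - m ≤ (n - 1 - j : ℕ) := by
      have := (Nat.cast_le (α := ℝ)).mpr (show n ≤ n - 1 - j + m by omega)
      push_cast at this
      linarith
    have hnm : (0 : ℝ) < n - m := by
      have := (Nat.cast_lt (α := ℝ)).mpr (show m < n by omega)
      linarith
    calc q (n - 1 - j) ≤ K * ((n - 1 - j : ℕ) : ℝ) ^ (-β) := ih _ (by omega) (by omega)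
      _ ≤ K * ((n : ℝ) - m) ^ (-β) :=
        mul_le_mul_of_nonneg_left (Real.rpow_le_rpow_of_nonpos hnm hcast (by linarith)) hK
  · refine sum_mul_le_sum_mul_of_le (fun j _ => hp _) fun j hj => ?_
    have hj := (mem_Ico.mp hj).2
    have hcast : (n : ℝ) / 2 ≤ (n - 1 - j : ℕ) := by
      have := (Nat.cast_le (α := ℝ)).mpr (show n ≤ 2 * (n - 1 - j) by omega)
      push_cast at this
      linarith
    calc q (n - 1 - j) ≤ K * ((n - 1 - j : ℕ) : ℝ) ^ (-β) := ih _ (by omega) (by omega)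
      _ ≤ K * (2 ^ β * (n : ℝ) ^ (-β)) :=
        mul_le_mul_of_nonneg_left (Real.rpow_neg_le_two_rpow_mul hβ hn hcast) hK
  · have hp_tail : ∀ j ∈ Ico (n / 2) n, p (j + 1) ≤ C * (2 ^ β * (n : ℝ) ^ (-β)) := by
      intro j hj
      have hj := (mem_Ico.mp hj).1
      have hcast : (n : ℝ) / 2 ≤ (j + 1 : ℕ) := by
        have := (Nat.cast_le (α := ℝ)).mpr (show n ≤ 2 * (j + 1) by omega)
        push_cast at this ⊢
        linarith
      exact (hpC _ (by omega)).trans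
        (mul_le_mul_of_nonneg_left (Real.rpow_neg_le_two_rpow_mul hβ hn hcast) hC)
    calc ∑ j ∈ Ico (n / 2) n, p (j + 1) * q (n - 1 - j)
        ≤ ∑ j ∈ Ico (n / 2) n, C * (2 ^ β * (n : ℝ) ^ (-β)) * q (n - 1 - j) :=
          sum_le_sum fun j hj => mul_le_mul_of_nonneg_right (hp_tail j hj) (hq_nonneg _)
      _ ≤ ∑ j ∈ range n, C * (2 ^ β * (n : ℝ) ^ (-β)) * q (n - 1 - j) :=
          sum_le_sum_of_subset_of_nonneg (fun j hj => mem_range.mpr (mem_Ico.mp hj).2)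
            fun j _ _ => mul_nonneg (by positivity) (hq_nonneg _)
      _ = C * (2 ^ β * (n : ℝ) ^ (-β)) * ∑ i ∈ range n, q i := by
          rw [← mul_sum, sum_range_reflect q n]

theorem renewal_le_rpow_neg_step (hα : 0 ≤ α) (hα1 : α < 1) (hp : ∀ n, 0 ≤ p n)
    (hP : HasSum (fun n => p (n + 1)) 1) {β C K : ℝ} (hβ : 0 < β) (hC : 0 ≤ C)
    (hpC : ∀ n : ℕ, 1 ≤ n → p n ≤ C * (n : ℝ) ^ (-β)) (hq0 : q 0 = 1)
    (hq : RenewalRecursion α p q) (hK : 0 ≤ K)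
    (habsorb : α * C * 2 ^ β * (1 - α)⁻¹ ≤ (1 - α) / 2 * K) {m n : ℕ}
    (hmass : 1 - (1 - α) / 4 / 2 ^ β ≤ ∑ j ∈ range m, p (j + 1)) (hmn : 2 * m < n)
    (hnear : ((n : ℝ) - m) ^ (-β) ≤ (1 + (1 - α) / 4) * (n : ℝ) ^ (-β))
    (ih : ∀ k, 1 ≤ k → k < n → q k ≤ K * (k : ℝ) ^ (-β)) :
    q n ≤ K * (n : ℝ) ^ (-β) := by
  set η := (1 - α) / 4 with hη_def
  have hη : 0 < η := by linarith
  set Q := (1 - α)⁻¹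
  have hq_nonneg := renewal_nonneg_s4 hα hp hq0 hq
  have hq_sum := hasSum_renewal hα hα1 hp hP hq0 hq
  have hmid : ∑ j ∈ Ico m (n / 2), p (j + 1) ≤ η / 2 ^ β := by
    have := sum_le_hasSum (range (n / 2)) (fun i _ => hp _) hP
    rw [← sum_range_add_sum_Ico _ (show m ≤ n / 2 by omega)] at this
    linarith
  have hnm : (0 : ℝ) ≤ n - m := by
    have := (Nat.cast_le (α := ℝ)).mpr (show m ≤ n by omega)
    linarith
  set r := (n : ℝ) ^ (-β)
  have hr : 0 < r := Real.rpow_pos_of_pos (by exact_mod_cast (show 0 < n by omega)) _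
  calc q n ≤ α * ((∑ j ∈ range m, p (j + 1)) * (K * ((n : ℝ) - m) ^ (-β))
        + (∑ j ∈ Ico m (n / 2), p (j + 1)) * (K * (2 ^ β * r))
        + C * (2 ^ β * r) * ∑ i ∈ range n, q i) :=
        renewal_le_split hα hp hq_nonneg hq hβ.le hC hpC hK hmn ih
    _ ≤ α * (1 * (K * ((1 + η) * r)) + η / 2 ^ β * (K * (2 ^ β * r)) + C * (2 ^ β * r) * Q) := by
        refine mul_le_mul_of_nonneg_left (add_le_add (add_le_add ?_ ?_) ?_) hα
        · exact mul_le_mul (sum_le_hasSum _ (fun i _ => hp _) hP)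
            (mul_le_mul_of_nonneg_left hnear hK) (by positivity) zero_le_one
        · gcongr
        · exact mul_le_mul_of_nonneg_left (sum_le_hasSum _ (fun i _ => hq_nonneg i) hq_sum)
            (by positivity)
    _ = α * (1 + 2 * η) * K * r + α * C * 2 ^ β * Q * r := by
        field_simp
        ring
    _ ≤ (1 - 2 * η) * K * r + 2 * η * K * r := by
        have hgain : α * (1 + 2 * η) ≤ 1 - 2 * η := by
          nlinarith [mul_le_mul_of_nonneg_right hα1.le hη.le]
        have habsorb' : α * C * 2 ^ β * Q ≤ 2 * η * K := by
          convert habsorb using 1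
          rw [hη_def]
          ring
        gcongr
    _ = K * r := by ring

theorem renewal_le_rpow_neg (hα : 0 ≤ α) (hα1 : α < 1) (hp : ∀ n, 0 ≤ p n)
    (hP : HasSum (fun n => p (n + 1)) 1) {β C : ℝ} (hβ : 0 < β) (hC : 0 ≤ C)
    (hpC : ∀ n : ℕ, 1 ≤ n → p n ≤ C * (n : ℝ) ^ (-β)) (hq0 : q 0 = 1)
    (hq : RenewalRecursion α p q) :
    ∃ C₁ : ℝ, 0 < C₁ ∧ ∀ n : ℕ, 1 ≤ n → q n ≤ C₁ * (n : ℝ) ^ (-β) := by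
  set Q := (1 - α)⁻¹
  have h1α : 0 < 1 - α := by linarith
  obtain ⟨m, hmass⟩ : ∃ m, 1 - (1 - α) / 4 / 2 ^ β ≤ ∑ j ∈ range m, p (j + 1) :=
    (hP.tendsto_sum_nat.eventually (eventually_ge_nhds (by
      have : 0 < (1 - α) / 4 / 2 ^ β := by positivity
      linarith))).exists
  obtain ⟨N₀, hN₀⟩ := ((eventually_sub_rpow_neg_le β m (by positivity : 0 < (1 - α) / 4)).and
    (eventually_gt_atTop (2 * m))).exists_forall_of_atTop
  have hN₀_pos : (0 : ℝ) < N₀ := by exact_mod_cast (hN₀ N₀ le_rfl).2.pos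
  set C₁ := max (α * C * 2 ^ β * Q / ((1 - α) / 2)) (Q * (N₀ : ℝ) ^ β)
  have hC₁ : 0 < C₁ := lt_max_of_lt_right (by positivity)
  have habsorb : α * C * 2 ^ β * Q ≤ (1 - α) / 2 * C₁ := by
    rw [← div_le_iff₀' (by positivity)]
    exact le_max_left _ _
  refine ⟨C₁, hC₁, fun n => ?_⟩
  induction n using Nat.strong_induction_on with
  | _ n ih =>
    intro hn
    rcases lt_or_ge n N₀ with hsmall | hlarge
    · have hn' : (0 : ℝ) < n := by exact_mod_cast hn
      calc q n ≤ Q * 1 := (le_hasSum (hasSum_renewal hα hα1 hp hP hq0 hq) n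
              fun j _ => renewal_nonneg_s4 hα hp hq0 hq j).trans_eq (mul_one Q).symm
        _ ≤ Q * ((N₀ : ℝ) ^ β * (n : ℝ) ^ (-β)) := by
            gcongr; exact Real.one_le_rpow_mul_rpow_neg hβ.le hn' (by exact_mod_cast hsmall.le)
        _ ≤ C₁ * (n : ℝ) ^ (-β) := by rw [← mul_assoc]; gcongr; exact le_max_right _ _
    · exact renewal_le_rpow_neg_step hα hα1 hp hP hβ hC hpC hq0 hq hC₁.le habsorb hmass
        (hN₀ n hlarge).2 (hN₀ n hlarge).1 fun k hk hkn => ih k hkn hk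

end Renewal

/-- Taylor coefficients of `(1 - α·p(z))⁻¹`: if `Σ_{n≥1} p_n = 1`, `p_n ≤ C n^{-(1+α₀)}`,
`α ∈ (0,1)`, `q₀ = 1` and `q_n = α Σ_{k=0}^{n-1} p_{n-k} q_k`, then `q_n ≥ α p_n ≥ 0`,
`Σ q_n = 1/(1-α)`, and `q_n ≤ C₁ n^{-(1+α₀)}` for some `C₁ > 0`. -/
theorem statement4 (α α₀ : ℝ) (hα : α ∈ Set.Ioo (0 : ℝ) 1) (hα₀ : 1 < α₀)
    (p : ℕ → ℝ) (hp : ∀ n, 0 ≤ p n) (hsum : ∑' n : ℕ, p (n + 1) = 1)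
    (C : ℝ) (hC : 0 < C)
    (hpC : ∀ n : ℕ, 1 ≤ n → p n ≤ C * (n : ℝ) ^ (-(1 + α₀)))
    (q : ℕ → ℝ) (hq0 : q 0 = 1)
    (hq : ∀ n : ℕ, 1 ≤ n → q n = α * ∑ k ∈ Finset.range n, p (n - k) * q k) :
    (∀ n : ℕ, 1 ≤ n → 0 ≤ α * p n ∧ α * p n ≤ q n) ∧
    (∑' n : ℕ, q n = 1 / (1 - α)) ∧
    ∃ C₁ : ℝ, 0 < C₁ ∧ ∀ n : ℕ, 1 ≤ n → q n ≤ C₁ * (n : ℝ) ^ (-(1 + α₀)) := by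
  obtain ⟨hα0, hα1⟩ := hα
  have hP : HasSum (fun n => p (n + 1)) 1 := by
    by_cases h : Summable fun n => p (n + 1)
    · exact hsum ▸ h.hasSum
    · simp [tsum_eq_zero_of_not_summable h] at hsum
  refine ⟨fun n hn => ⟨mul_nonneg hα0.le (hp n), mul_le_renewal hα0.le hp hq0 hq hn⟩, ?_, ?_⟩
  · rw [one_div]
    exact (hasSum_renewal hα0.le hα1 hp hP hq0 hq).tsum_eq
  · exact renewal_le_rpow_neg hα0.le hα1 hp hP (by linarith) hC.le hpC hq0 hq
end

section
/- Let α > 1. Suppose (q_n)_{n≥0} and (a_n)_{n≥0} are nonnegative real sequences with q_n ≤ C_q·n^{-(1+α)} for all n ≥ 1 and a_n ≤ C_a·n^{-α} for all n ≥ 1 (q₀, a₀ ≥ 0 arbitrary). Then there exists a constant C > 0 such that the convolution satisfies Σ_{k=0}^{n} q_{n−k}·a_k ≤ C·n^{-α} for every integer n ≥ 1. -/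
/-! Split the convolution at `k = n / 2`. For `k ≤ n / 2` the index `n - k` is at least `n / 2`, so
`q (n - k) = O(n^{-(1+α)}) ⊆ O(n^{-α})`, and the remaining sum of the `a k` is bounded by `∑ a`; for
`k > n / 2` instead `a k = O(n^{-α})` and the remaining sum of the `q (n - k)` is bounded by `∑ q`.
Both series converge because `α > 1`. -/

open Finset

section PowerDecay

variable {b : ℕ → ℝ} {C β : ℝ}

theorem summable_of_le_mul_rpow_neg (hβ : 1 < β) (hb : ∀ n, 0 ≤ b n)
    (hbC : ∀ n : ℕ, 1 ≤ n → b n ≤ C * (n : ℝ) ^ (-β)) : Summable b := by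
  rw [← summable_nat_add_iff 1]
  refine Summable.of_nonneg_of_le (fun n => hb _) (fun n => hbC _ (by omega)) ?_
  exact ((summable_nat_add_iff 1).2 (Real.summable_nat_rpow.2 (by linarith))).mul_left C

theorem nonneg_of_le_mul_rpow_neg (hb₁ : 0 ≤ b 1)
    (hbC : ∀ n : ℕ, 1 ≤ n → b n ≤ C * (n : ℝ) ^ (-β)) : 0 ≤ C :=
  hb₁.trans (by simpa using hbC 1 le_rfl)

theorem le_two_rpow_mul_of_le_mul_rpow_neg (hβ : 0 ≤ β) (hb₁ : 0 ≤ b 1)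
    (hbC : ∀ n : ℕ, 1 ≤ n → b n ≤ C * (n : ℝ) ^ (-β)) {n j : ℕ} (hn : 1 ≤ n) (hj : n ≤ 2 * j) :
    b j ≤ 2 ^ β * C * (n : ℝ) ^ (-β) := by
  have hC := nonneg_of_le_mul_rpow_neg hb₁ hbC
  have hn' : (0 : ℝ) < n / 2 := by positivity
  have hj' : (n : ℝ) / 2 ≤ j := by
    rw [div_le_iff₀ two_pos]; exact_mod_cast (by omega : n ≤ j * 2)
  calc b j ≤ C * (j : ℝ) ^ (-β) := hbC j (by omega)
    _ ≤ C * ((n : ℝ) / 2) ^ (-β) :=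
        mul_le_mul_of_nonneg_left (Real.rpow_le_rpow_of_nonpos hn' hj' (by linarith)) hC
    _ = 2 ^ β * C * (n : ℝ) ^ (-β) := by
        rw [Real.div_rpow (Nat.cast_nonneg n) zero_le_two, Real.rpow_neg zero_le_two, div_inv_eq_mul]
        ring

theorem le_mul_rpow_neg_of_exponent_le {γ : ℝ} (hγβ : γ ≤ β) (hb₁ : 0 ≤ b 1)
    (hbC : ∀ n : ℕ, 1 ≤ n → b n ≤ C * (n : ℝ) ^ (-β)) (n : ℕ) (hn : 1 ≤ n) :
    b n ≤ C * (n : ℝ) ^ (-γ) := by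
  have hC := nonneg_of_le_mul_rpow_neg hb₁ hbC
  refine (hbC n hn).trans ?_
  gcongr
  exact Nat.one_le_cast.2 hn

end PowerDecay

theorem sum_range_sub_mul_le_of_half_bounds {q a : ℕ → ℝ} (hq : ∀ n, 0 ≤ q n)
    (ha : ∀ n, 0 ≤ a n) {n : ℕ} {Q A : ℝ} (hqQ : ∀ j, n ≤ 2 * j → q j ≤ Q)
    (haA : ∀ k, n ≤ 2 * k → a k ≤ A) :
    ∑ k ∈ range (n + 1), q (n - k) * a k ≤
      Q * ∑ k ∈ range (n + 1), a k + A * ∑ k ∈ range (n + 1), q k := by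
  have hQ : 0 ≤ Q := (hq n).trans (hqQ n (by omega))
  rw [← sum_filter_add_sum_filter_not (range (n + 1)) (fun k => n ≤ 2 * (n - k))
    (fun k => q (n - k) * a k)]
  gcongr ?_ + ?_
  · calc ∑ k ∈ range (n + 1) with n ≤ 2 * (n - k), q (n - k) * a k
        ≤ ∑ k ∈ range (n + 1) with n ≤ 2 * (n - k), Q * a k := by
          gcongr with k hk
          · exact ha k
          · exact hqQ _ (mem_filter.1 hk).2
      _ ≤ Q * ∑ k ∈ range (n + 1), a k := by
          rw [← mul_sum]
          gcongr
          · exact fun k _ _ => ha k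
          · exact filter_subset _ _
  · calc ∑ k ∈ range (n + 1) with ¬n ≤ 2 * (n - k), q (n - k) * a k
        ≤ ∑ k ∈ range (n + 1) with ¬n ≤ 2 * (n - k), A * q (n - k) := by
          refine sum_le_sum fun k hk => ?_
          have hk' : n ≤ 2 * k := by have := (mem_filter.1 hk).2; omega
          exact (mul_le_mul_of_nonneg_left (haA k hk') (hq _)).trans_eq (mul_comm _ _)
      _ ≤ A * ∑ k ∈ range (n + 1), q (n - k) := by
          have hA : 0 ≤ A := (ha n).trans (haA n (by omega))
          rw [← mul_sum]
          gcongr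
          · exact fun k _ _ => hq _
          · exact filter_subset _ _
      _ = A * ∑ k ∈ range (n + 1), q k := by
          simpa using congrArg (A * ·) (sum_range_reflect q (n + 1))

/-- Discrete convolution estimate: if `q_n ≤ C_q n^{-(1+α)}` and `a_n ≤ C_a n^{-α}` for `n ≥ 1`
(both sequences nonnegative, `α > 1`), then `Σ_{k=0}^{n} q_{n-k} a_k ≤ C n^{-α}` for all `n ≥ 1`. -/
theorem statement6 (α : ℝ) (hα : 1 < α)
    (q a : ℕ → ℝ) (hq : ∀ n, 0 ≤ q n) (ha : ∀ n, 0 ≤ a n)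
    (C_q C_a : ℝ)
    (hqC : ∀ n : ℕ, 1 ≤ n → q n ≤ C_q * (n : ℝ) ^ (-(1 + α)))
    (haC : ∀ n : ℕ, 1 ≤ n → a n ≤ C_a * (n : ℝ) ^ (-α)) :
    ∃ C : ℝ, 0 < C ∧ ∀ n : ℕ, 1 ≤ n →
      ∑ k ∈ Finset.range (n + 1), q (n - k) * a k ≤ C * (n : ℝ) ^ (-α) := by
  have hqs := summable_of_le_mul_rpow_neg (by linarith) hq hqC
  have has := summable_of_le_mul_rpow_neg hα ha haC
  have hqC' := le_mul_rpow_neg_of_exponent_le (by linarith) (hq 1) hqC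
  set K := 2 ^ α * (C_q * ∑' k, a k + C_a * ∑' k, q k)
  refine ⟨max K 1, one_pos.trans_le (le_max_right _ _), fun n hn => ?_⟩
  have hqQ (j : ℕ) (hj : n ≤ 2 * j) : q j ≤ 2 ^ α * C_q * (n : ℝ) ^ (-α) :=
    le_two_rpow_mul_of_le_mul_rpow_neg (by linarith) (hq 1) hqC' hn hj
  have haA (k : ℕ) (hk : n ≤ 2 * k) : a k ≤ 2 ^ α * C_a * (n : ℝ) ^ (-α) :=
    le_two_rpow_mul_of_le_mul_rpow_neg (by linarith) (ha 1) haC hn hk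
  calc ∑ k ∈ range (n + 1), q (n - k) * a k
      ≤ 2 ^ α * C_q * (n : ℝ) ^ (-α) * ∑ k ∈ range (n + 1), a k
        + 2 ^ α * C_a * (n : ℝ) ^ (-α) * ∑ k ∈ range (n + 1), q k :=
        sum_range_sub_mul_le_of_half_bounds hq ha hqQ haA
    _ ≤ 2 ^ α * C_q * (n : ℝ) ^ (-α) * ∑' k, a k
        + 2 ^ α * C_a * (n : ℝ) ^ (-α) * ∑' k, q k := by
        gcongr
        · exact (hq n).trans (hqQ n (by omega))
        · exact has.sum_le_tsum _ fun k _ => ha k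
        · exact (ha n).trans (haA n (by omega))
        · exact hqs.sum_le_tsum _ fun k _ => hq k
    _ = K * (n : ℝ) ^ (-α) := by ring
    _ ≤ max K 1 * (n : ℝ) ^ (-α) := by gcongr; exact le_max_left _ _
end

section
/- Assume R < ∞ μ-a.e. and that there exist C > 0 and α₀ > 1 with μ(M ∩ {R = k}) ≤ C·k^{-(1+α₀)} for all k ≥ 1. Set β₀ = min{α₀, 2α₀ − 2}. Then there exist C' > 0 and N ≥ 1 such that for every n ≥ N (so that μ(B_n) < 1) and every bounded measurable f : X → ℝ vanishing μ-a.e. outside M, | ∫ f∘Tⁿ dμⁿ − (∫ f dμ)·(1 + μ({R > n})) | ≤ C'·‖f‖_∞·n^{-β₀}. Equivalently, for any probability measure ν on X, ∫ f∘Tⁿ dν − ∫ f dμ − (∫ f dμ)·μ({R > n}) = ( ∫ f∘Tⁿ dν − ∫ f∘Tⁿ dμⁿ ) + O(‖f‖_∞ n^{-β₀}). -/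
/-!
Write `Aₙ = {R > n}`. A point lies in `Aₙ₊₁` iff `T x ∈ Aₙ \ M`, so invariance of `μ` gives
`μ(Bₙ) = μ(Aₙ₊₁)` and `μ(Aₙ) = μ(M ∩ Aₙ) + μ(Aₙ₊₁)`. Telescoping the latter (Kac's formula, using
`μ(Aₙ) → 0` since `R < ∞` a.e.) and comparing the tail hypothesis with an integral yields
`μ(M ∩ Aₙ) = O(n^{-α₀})` and `μ(Aₙ) = O(n^{1-α₀})`.

On `Bₙ` the point `Tⁿ x` lies outside `M`, where `f` vanishes, so
`∫ f∘Tⁿ dμⁿ = (∫ f dμ) / (1 - μ(Bₙ))`. With `a = μ(Aₙ)`, `b = μ(Bₙ)`, the error term is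
`(∫ f dμ) (a b - μ(M ∩ Aₙ)) / (1 - b) = O(‖f‖∞ (a² + μ(M ∩ Aₙ)))`, and the two summands are
`O(n^{2-2α₀})` and `O(n^{-α₀})`, whence the exponent `β₀ = min(α₀, 2α₀ - 2)`.
-/

open MeasureTheory
open scoped ENNReal

/-- The first hitting time of `M` under iterations of `T`:
`R(x) = inf {n ≥ 1 : Tⁿ x ∈ M}`, valued in `ℕ∞` (equal to `⊤` if the orbit never enters `M`). -/
noncomputable def firstHitting {X : Type*} (T : X → X) (M : Set X) (x : X) : ℕ∞ :=
  sInf {n : ℕ∞ | ∃ k : ℕ, n = (k : ℕ∞) ∧ 1 ≤ k ∧ T^[k] x ∈ M}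

open Filter Topology

section Hitting

variable {X : Type*} {T : X → X} {M : Set X}

theorem lt_firstHitting_iff {n : ℕ} {x : X} :
    (n : ℕ∞) < firstHitting T M x ↔ ∀ k < n, T^[k + 1] x ∉ M := by
  rw [← ENat.natCast_add_one_le_iff, firstHitting, le_sInf_iff]
  constructor
  · intro h k hk hkM
    have := h _ ⟨k + 1, rfl, by omega, hkM⟩
    norm_cast at this
    omega
  · rintro h _ ⟨k, rfl, hk, hkM⟩
    by_contra! hlt
    norm_cast at hlt
    exact h (k - 1) (by omega) (by rwa [Nat.sub_add_cancel hk])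

theorem setOf_succ_lt_firstHitting_eq_preimage (n : ℕ) :
    {x | ((n + 1 : ℕ) : ℕ∞) < firstHitting T M x} =
      T ⁻¹' (Mᶜ ∩ {x | (n : ℕ∞) < firstHitting T M x}) := by
  ext x
  simp only [Set.mem_ofPred_eq, Set.mem_preimage, Set.mem_inter_iff, Set.mem_compl_iff,
    lt_firstHitting_iff, Nat.forall_lt_succ_left, Function.iterate_succ_apply,
    Function.iterate_zero_apply]

theorem setOf_lt_firstHitting_subset_preimage_iterate {n : ℕ} (hn : 1 ≤ n) :
    {x | (n : ℕ∞) < firstHitting T M x} ⊆ T^[n] ⁻¹' Mᶜ := by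
  intro x hx
  have := lt_firstHitting_iff.1 hx (n - 1) (by omega)
  rwa [Nat.sub_add_cancel hn] at this

theorem iInter_setOf_lt_firstHitting :
    ⋂ n : ℕ, {x | (n : ℕ∞) < firstHitting T M x} = {x | firstHitting T M x = ⊤} := by
  ext x
  simp [ENat.eq_top_iff_forall_gt]

theorem setOf_lt_firstHitting_subset_union (n : ℕ) :
    {x | (n : ℕ∞) < firstHitting T M x} ⊆
      {x | firstHitting T M x = ⊤} ∪
        ⋃ j : ℕ, {x | firstHitting T M x = ((n + 1 + j : ℕ) : ℕ∞)} := by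
  intro x hx
  simp only [Set.mem_ofPred_eq] at hx
  induction h : firstHitting T M x using ENat.recTopCoe with
  | top => exact Or.inl h
  | coe m =>
    rw [h, Nat.cast_lt] at hx
    exact Or.inr (Set.mem_iUnion.2 ⟨m - (n + 1), by rw [Set.mem_ofPred_eq, h]; congr 1; omega⟩)

end Hitting

theorem ENNReal.eq_tsum_of_eq_add_succ {a d : ℕ → ℝ≥0∞} (h : ∀ n, a n = d n + a (n + 1))
    (ha : Tendsto a atTop (𝓝 0)) : a 0 = ∑' n, d n := by
  have partial_sum : ∀ m, a 0 = ∑ k ∈ Finset.range m, d k + a m := by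
    intro m
    induction m with
    | zero => simp
    | succ m ih => rw [Finset.sum_range_succ, add_assoc, ← h, ih]
  have := (ENNReal.tendsto_nat_tsum d).add ha
  rw [add_zero] at this
  exact tendsto_nhds_unique (tendsto_const_nhds.congr partial_sum) this

theorem Real.summable_nat_add_rpow_neg {s : ℝ} (hs : 1 < s) (n : ℕ) :
    Summable fun j : ℕ => ((n + j : ℕ) : ℝ) ^ (-s) :=
  ((summable_nat_add_iff n).2 (Real.summable_nat_rpow.2 (neg_lt_neg hs))).congr fun j => by
    rw [add_comm]

theorem Real.tsum_nat_add_rpow_neg_le {s : ℝ} (hs : 1 < s) {n : ℕ} (hn : 1 ≤ n) :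
    ∑' j : ℕ, ((n + j : ℕ) : ℝ) ^ (-s) ≤ (1 + (s - 1)⁻¹) * (n : ℝ) ^ (1 - s) := by
  have hn0 : (0 : ℝ) < n := by exact_mod_cast hn
  have hanti : AntitoneOn (fun x : ℝ => x ^ (-s)) (Set.Ici (n : ℝ)) := fun x hx y _ hxy =>
    Real.rpow_le_rpow_of_nonpos (hn0.trans_le hx) hxy (by linarith)
  have htail := hanti.tsum_comp_add_le_integral n (integrableOn_Ioi_rpow_of_lt (by linarith) hn0)
    fun t ht => Real.rpow_nonneg (hn0.trans ht).le _
  rw [integral_Ioi_rpow_of_lt (by linarith) hn0] at htail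
  have hhead : (n : ℝ) ^ (-s) ≤ (n : ℝ) ^ (1 - s) :=
    Real.rpow_le_rpow_of_exponent_le (by exact_mod_cast hn) (by linarith)
  rw [(Real.summable_nat_add_rpow_neg hs n).tsum_eq_zero_add]
  calc ((n + 0 : ℕ) : ℝ) ^ (-s) + ∑' j : ℕ, ((n + (j + 1) : ℕ) : ℝ) ^ (-s)
      ≤ (n : ℝ) ^ (1 - s) + -(n : ℝ) ^ (-s + 1) / (-s + 1) := by
        rw [add_zero]
        gcongr
        exact le_of_eq_of_le (tsum_congr fun j => by ring_nf) htail
    _ = (1 + (s - 1)⁻¹) * (n : ℝ) ^ (1 - s) := by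
        rw [show -s + 1 = 1 - s by ring, show 1 - s = -(s - 1) by ring]
        field_simp

theorem ENNReal.tsum_nat_add_le_ofReal_rpow {d : ℕ → ℝ≥0∞} {c s : ℝ} (hc : 0 ≤ c) (hs : 1 < s)
    {n : ℕ} (hn : 1 ≤ n) (hd : ∀ k, n ≤ k → d k ≤ ENNReal.ofReal (c * (k : ℝ) ^ (-s))) :
    ∑' j, d (n + j) ≤ ENNReal.ofReal (c * (1 + (s - 1)⁻¹) * (n : ℝ) ^ (1 - s)) :=
  calc ∑' j, d (n + j) ≤ ∑' j : ℕ, ENNReal.ofReal (c * ((n + j : ℕ) : ℝ) ^ (-s)) :=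
        ENNReal.tsum_le_tsum fun j => hd _ (Nat.le_add_right n j)
    _ = ENNReal.ofReal (c * ∑' j : ℕ, ((n + j : ℕ) : ℝ) ^ (-s)) := by
        rw [← tsum_mul_left, ENNReal.ofReal_tsum_of_nonneg (fun j => by positivity)
          ((Real.summable_nat_add_rpow_neg hs n).mul_left c)]
    _ ≤ ENNReal.ofReal (c * (1 + (s - 1)⁻¹) * (n : ℝ) ^ (1 - s)) := by
        rw [mul_assoc]
        gcongr
        exact Real.tsum_nat_add_rpow_neg_le hs hn

theorem abs_inv_one_sub_mul_sub_le {I b m : ℝ} (hb0 : 0 ≤ b) (hb : b ≤ 1 / 2) (hm : 0 ≤ m) :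
    |(1 - b)⁻¹ * I - I * (1 + (m + b))| ≤ 2 * |I| * ((m + b) ^ 2 + m) := by
  have h1b : 0 < 1 - b := by linarith
  have hkey : (1 - b)⁻¹ * I - I * (1 + (m + b)) = I * ((m + b) * b - m) * (1 - b)⁻¹ := by
    field_simp
    ring
  have hinv : (1 - b)⁻¹ ≤ 2 := by
    rw [inv_le_comm₀ h1b two_pos]
    linarith
  have hnum : |(m + b) * b - m| ≤ (m + b) ^ 2 + m := by
    rw [abs_le]
    constructor <;> nlinarith
  rw [hkey, abs_mul, abs_mul, abs_inv, abs_of_pos h1b]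
  calc |I| * |(m + b) * b - m| * (1 - b)⁻¹ ≤ |I| * ((m + b) ^ 2 + m) * 2 := by gcongr
    _ = 2 * |I| * ((m + b) ^ 2 + m) := by ring

theorem sq_add_le_mul_rpow_neg_min {a m c₁ c₂ α x : ℝ} (hx : 1 ≤ x) (ha0 : 0 ≤ a)
    (ha : a ≤ c₂ * x ^ (1 - α)) (hm : m ≤ c₁ * x ^ (-α)) (hc₁ : 0 ≤ c₁) :
    a ^ 2 + m ≤ (c₂ ^ 2 + c₁) * x ^ (-min α (2 * α - 2)) := by
  have hsq : (c₂ * x ^ (1 - α)) ^ 2 = c₂ ^ 2 * x ^ (-(2 * α - 2)) := by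
    rw [mul_pow, ← Real.rpow_natCast (x ^ (1 - α)), ← Real.rpow_mul (by linarith)]
    ring_nf
  have h₁ : x ^ (-(2 * α - 2)) ≤ x ^ (-min α (2 * α - 2)) :=
    Real.rpow_le_rpow_of_exponent_le hx (neg_le_neg (min_le_right _ _))
  have h₂ : x ^ (-α) ≤ x ^ (-min α (2 * α - 2)) :=
    Real.rpow_le_rpow_of_exponent_le hx (neg_le_neg (min_le_left _ _))
  calc a ^ 2 + m ≤ (c₂ * x ^ (1 - α)) ^ 2 + c₁ * x ^ (-α) := by gcongr
    _ ≤ (c₂ ^ 2 + c₁) * x ^ (-min α (2 * α - 2)) := by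
        rw [hsq, add_mul]
        gcongr

theorem integral_comp_cond_compl {X Y : Type*} [MeasurableSpace X] [MeasurableSpace Y]
    {μ : Measure X} {ν : Measure Y} {S : X → Y} (hS : MeasurePreserving S μ ν) {f : Y → ℝ}
    (hf : AEStronglyMeasurable f ν) {M : Set Y} {B : Set X} (hB : B ⊆ S ⁻¹' Mᶜ)
    (hf0 : ∀ᵐ y ∂ν, y ∉ M → f y = 0) :
    ∫ x, f (S x) ∂ProbabilityTheory.cond μ Bᶜ = (μ Bᶜ).toReal⁻¹ * ∫ y, f y ∂ν := by
  have hvanish : ∀ᵐ x ∂μ, x ∉ Bᶜ → f (S x) = 0 := by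
    filter_upwards [hS.quasiMeasurePreserving.ae hf0] with x hx hxB
    exact hx (hB (Set.not_notMem.1 hxB))
  rw [ProbabilityTheory.cond, integral_smul_measure, ENNReal.toReal_inv, smul_eq_mul,
    setIntegral_eq_integral_of_ae_compl_eq_zero hvanish, ← integral_map hS.aemeasurable
      (by rwa [hS.map_eq]), hS.map_eq]

section Measure

variable {X : Type*} [MeasurableSpace X] {μ : Measure X} {T : X → X} {M : Set X}

theorem measurableSet_setOf_lt_firstHitting (hT : Measurable T) (hM : MeasurableSet M) (n : ℕ) :
    MeasurableSet {x | (n : ℕ∞) < firstHitting T M x} := by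
  induction n with
  | zero =>
    convert MeasurableSet.univ
    exact Set.eq_univ_of_forall fun x =>
      lt_firstHitting_iff.2 fun k hk => (Nat.not_lt_zero k hk).elim
  | succ n ih =>
    rw [setOf_succ_lt_firstHitting_eq_preimage]
    exact hT (hM.compl.inter ih)

theorem tendsto_measure_setOf_lt_firstHitting [IsFiniteMeasure μ] (hT : Measurable T)
    (hM : MeasurableSet M) (hfin : ∀ᵐ x ∂μ, firstHitting T M x ≠ ⊤) :
    Tendsto (fun n : ℕ => μ {x | (n : ℕ∞) < firstHitting T M x}) atTop (𝓝 0) := by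
  have hanti : Antitone fun n : ℕ => {x | (n : ℕ∞) < firstHitting T M x} :=
    fun m n hmn x (hx : (n : ℕ∞) < _) => show (m : ℕ∞) < _ from (Nat.cast_le.2 hmn).trans_lt hx
  have hnull : μ {x | firstHitting T M x = ⊤} = 0 := by
    simpa using ae_iff.1 hfin
  have := tendsto_measure_iInter_atTop
    (fun n => (measurableSet_setOf_lt_firstHitting hT hM n).nullMeasurableSet) hanti
    ⟨0, measure_ne_top μ _⟩
  rwa [iInter_setOf_lt_firstHitting, hnull] at this

theorem measure_setOf_lt_firstHitting_diff (hT : MeasurePreserving T μ μ) (hM : MeasurableSet M)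
    (n : ℕ) :
    μ ({x | (n : ℕ∞) < firstHitting T M x} \ M) =
      μ {x | ((n + 1 : ℕ) : ℕ∞) < firstHitting T M x} := by
  rw [setOf_succ_lt_firstHitting_eq_preimage, hT.measure_preimage, Set.sdiff_eq_compl_inter]
  exact (hM.compl.inter (measurableSet_setOf_lt_firstHitting hT.measurable hM n)).nullMeasurableSet

theorem integral_comp_iterate_cond_eq [IsProbabilityMeasure μ] (hT : MeasurePreserving T μ μ)
    (hM : MeasurableSet M) {f : X → ℝ} (hf : AEStronglyMeasurable f μ)
    (hf0 : ∀ᵐ x ∂μ, x ∉ M → f x = 0) {n : ℕ} (hn : 1 ≤ n) :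
    ∫ x, f (T^[n] x) ∂ProbabilityTheory.cond μ ({x | (n : ℕ∞) < firstHitting T M x} \ M)ᶜ =
      (1 - (μ {x | ((n + 1 : ℕ) : ℕ∞) < firstHitting T M x}).toReal)⁻¹ * ∫ x, f x ∂μ := by
  rw [integral_comp_cond_compl (hT.iterate n) hf
      (Set.sdiff_subset.trans (setOf_lt_firstHitting_subset_preimage_iterate hn)) hf0,
    prob_compl_eq_one_sub ((measurableSet_setOf_lt_firstHitting hT.measurable hM n).diff hM),
    measure_setOf_lt_firstHitting_diff hT hM n,
    ENNReal.toReal_sub_of_le prob_le_one ENNReal.one_ne_top, ENNReal.toReal_one]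

theorem measure_setOf_lt_firstHitting_eq (hT : MeasurePreserving T μ μ) (hM : MeasurableSet M)
    (n : ℕ) :
    μ {x | (n : ℕ∞) < firstHitting T M x} =
      μ (M ∩ {x | (n : ℕ∞) < firstHitting T M x}) +
        μ {x | ((n + 1 : ℕ) : ℕ∞) < firstHitting T M x} := by
  rw [← measure_setOf_lt_firstHitting_diff hT hM, Set.inter_comm, measure_inter_add_sdiff _ hM]

theorem measure_setOf_lt_firstHitting_eq_tsum [IsFiniteMeasure μ] (hT : MeasurePreserving T μ μ)
    (hM : MeasurableSet M) (hfin : ∀ᵐ x ∂μ, firstHitting T M x ≠ ⊤) (n : ℕ) :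
    μ {x | (n : ℕ∞) < firstHitting T M x} =
      ∑' k : ℕ, μ (M ∩ {x | ((n + k : ℕ) : ℕ∞) < firstHitting T M x}) :=
  ENNReal.eq_tsum_of_eq_add_succ (a := fun k => μ {x | ((n + k : ℕ) : ℕ∞) < firstHitting T M x})
    (fun k => measure_setOf_lt_firstHitting_eq hT hM (n + k))
    ((tendsto_measure_setOf_lt_firstHitting hT.measurable hM hfin).comp
      (tendsto_atTop_atTop_of_monotone (fun _ _ h => by omega) fun k => ⟨k, by omega⟩))

theorem measure_inter_setOf_lt_firstHitting_le (hfin : ∀ᵐ x ∂μ, firstHitting T M x ≠ ⊤)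
    {C α : ℝ} (hC : 0 ≤ C) (hα : 0 < α)
    (htail : ∀ k : ℕ, 1 ≤ k →
      μ (M ∩ {x | firstHitting T M x = (k : ℕ∞)}) ≤ ENNReal.ofReal (C * (k : ℝ) ^ (-(1 + α))))
    {n : ℕ} (hn : 1 ≤ n) :
    μ (M ∩ {x | (n : ℕ∞) < firstHitting T M x}) ≤
      ENNReal.ofReal (C * (1 + α⁻¹) * (n : ℝ) ^ (-α)) := by
  have hnull : μ {x | firstHitting T M x = ⊤} = 0 := by
    simpa using ae_iff.1 hfin
  calc μ (M ∩ {x | (n : ℕ∞) < firstHitting T M x})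
      ≤ μ ({x | firstHitting T M x = ⊤} ∪
          ⋃ j : ℕ, M ∩ {x | firstHitting T M x = ((n + 1 + j : ℕ) : ℕ∞)}) := by
        refine measure_mono fun x ⟨hxM, hx⟩ => ?_
        rcases setOf_lt_firstHitting_subset_union n hx with htop | hj
        · exact Or.inl htop
        · obtain ⟨j, hj⟩ := Set.mem_iUnion.1 hj
          exact Or.inr (Set.mem_iUnion.2 ⟨j, hxM, hj⟩)
    _ ≤ ∑' j : ℕ, μ (M ∩ {x | firstHitting T M x = ((n + 1 + j : ℕ) : ℕ∞)}) := by
        grw [measure_union_le, hnull, zero_add, measure_iUnion_le]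
    _ ≤ ENNReal.ofReal (C * (1 + ((1 + α) - 1)⁻¹) * ((n + 1 : ℕ) : ℝ) ^ (1 - (1 + α))) :=
        ENNReal.tsum_nat_add_le_ofReal_rpow hC (by linarith) (by omega)
          fun k hk => htail k (by omega)
    _ ≤ ENNReal.ofReal (C * (1 + α⁻¹) * (n : ℝ) ^ (-α)) := by
        rw [add_sub_cancel_left, sub_add_cancel_left]
        have hn0 : (0 : ℝ) < n := by exact_mod_cast hn
        refine ENNReal.ofReal_le_ofReal (mul_le_mul_of_nonneg_left ?_ (by positivity))
        exact Real.rpow_le_rpow_of_nonpos hn0 (by push_cast; linarith) (by linarith)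

theorem measure_setOf_lt_firstHitting_le [IsFiniteMeasure μ] (hT : MeasurePreserving T μ μ)
    (hM : MeasurableSet M) (hfin : ∀ᵐ x ∂μ, firstHitting T M x ≠ ⊤) {C α : ℝ} (hC : 0 ≤ C)
    (hα : 1 < α)
    (htail : ∀ k : ℕ, 1 ≤ k →
      μ (M ∩ {x | firstHitting T M x = (k : ℕ∞)}) ≤ ENNReal.ofReal (C * (k : ℝ) ^ (-(1 + α))))
    {n : ℕ} (hn : 1 ≤ n) :
    μ {x | (n : ℕ∞) < firstHitting T M x} ≤
      ENNReal.ofReal (C * (1 + α⁻¹) * (1 + (α - 1)⁻¹) * (n : ℝ) ^ (1 - α)) := by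
  rw [measure_setOf_lt_firstHitting_eq_tsum hT hM hfin n]
  exact ENNReal.tsum_nat_add_le_ofReal_rpow (by positivity) hα hn fun k hk =>
    measure_inter_setOf_lt_firstHitting_le hfin hC (by linarith) htail (by omega)

theorem sq_measure_add_measure_inter_le [IsFiniteMeasure μ] (hT : MeasurePreserving T μ μ)
    (hM : MeasurableSet M) (hfin : ∀ᵐ x ∂μ, firstHitting T M x ≠ ⊤) {C α : ℝ} (hC : 0 ≤ C)
    (hα : 1 < α)
    (htail : ∀ k : ℕ, 1 ≤ k →
      μ (M ∩ {x | firstHitting T M x = (k : ℕ∞)}) ≤ ENNReal.ofReal (C * (k : ℝ) ^ (-(1 + α))))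
    {n : ℕ} (hn : 1 ≤ n) :
    (μ {x | (n : ℕ∞) < firstHitting T M x}).toReal ^ 2 +
        (μ (M ∩ {x | (n : ℕ∞) < firstHitting T M x})).toReal ≤
      ((C * (1 + α⁻¹) * (1 + (α - 1)⁻¹)) ^ 2 + C * (1 + α⁻¹)) *
        (n : ℝ) ^ (-min α (2 * α - 2)) :=
  sq_add_le_mul_rpow_neg_min (by exact_mod_cast hn) ENNReal.toReal_nonneg
    (ENNReal.toReal_le_of_le_ofReal (by positivity)
      (measure_setOf_lt_firstHitting_le hT hM hfin hC hα htail hn))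
    (ENNReal.toReal_le_of_le_ofReal (by positivity)
      (measure_inter_setOf_lt_firstHitting_le hfin hC (by linarith) htail hn))
    (by positivity)

end Measure

/-- Under the tail assumption `μ(M ∩ {R = k}) ≤ C k^{-(1+α₀)}` (`α₀ > 1`) and `R < ∞` a.e.,
with `β₀ = min(α₀, 2α₀ - 2)`: there are `C' > 0`, `N ≥ 1` such that for all `n ≥ N`
(`μ(Bₙ) < 1`, `Bₙ = {R > n} \ M`) and all bounded measurable `f` vanishing a.e. outside `M`,
`|∫ f∘Tⁿ dμⁿ - (∫ f dμ)(1 + μ(R > n))| ≤ C' ‖f‖_∞ n^{-β₀}`, where `μⁿ = μ(·|Bₙᶜ)`. -/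
theorem statement8 {X : Type*} [MeasurableSpace X] (μ : Measure X) [IsProbabilityMeasure μ]
    (T : X → X) (hT : MeasurePreserving T μ μ) (M : Set X) (hM : MeasurableSet M)
    (hfin : ∀ᵐ x ∂μ, firstHitting T M x ≠ ⊤)
    (C α₀ : ℝ) (hC : 0 < C) (hα₀ : 1 < α₀)
    (htail : ∀ k : ℕ, 1 ≤ k →
      μ (M ∩ {x | firstHitting T M x = (k : ℕ∞)}) ≤
        ENNReal.ofReal (C * (k : ℝ) ^ (-(1 + α₀)))) :
    ∃ C' : ℝ, 0 < C' ∧ ∃ N : ℕ, 1 ≤ N ∧ ∀ n : ℕ, N ≤ n →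
      μ ({x | (n : ℕ∞) < firstHitting T M x} \ M) < 1 ∧
      ∀ f : X → ℝ, Measurable f → ∀ K : ℝ, (∀ x, |f x| ≤ K) →
        (∀ᵐ x ∂μ, x ∉ M → f x = 0) →
        |(∫ x, f (T^[n] x)
            ∂(ProbabilityTheory.cond μ ({x | (n : ℕ∞) < firstHitting T M x} \ M)ᶜ)) -
          (∫ x, f x ∂μ) * (1 + (μ {x | (n : ℕ∞) < firstHitting T M x}).toReal)| ≤
          C' * K * (n : ℝ) ^ (-(min α₀ (2 * α₀ - 2))) := by
  set c₁ := C * (1 + α₀⁻¹)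
  set c₂ := c₁ * (1 + (α₀ - 1)⁻¹)
  obtain ⟨N, hN⟩ := eventually_atTop.1 <|
    (tendsto_measure_setOf_lt_firstHitting hT.measurable hM hfin).eventually_lt_const
      (by norm_num : (0 : ℝ≥0∞) < ENNReal.ofReal (1 / 2))
  refine ⟨2 * (c₂ ^ 2 + c₁), by positivity, N + 1, by omega, fun n hn => ?_⟩
  have hn1 : 1 ≤ n := by omega
  have hhalf := hN (n + 1) (by omega)
  refine ⟨measure_setOf_lt_firstHitting_diff hT hM n ▸
    hhalf.trans (ENNReal.ofReal_lt_one.2 (by norm_num)), fun f hf K hK hf0 => ?_⟩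
  have hIK : |∫ x, f x ∂μ| ≤ K := by
    simpa using norm_integral_le_of_norm_le_const (μ := μ) (f := f) (ae_of_all _ hK)
  have hsplit : (μ {x | (n : ℕ∞) < firstHitting T M x}).toReal =
      (μ (M ∩ {x | (n : ℕ∞) < firstHitting T M x})).toReal +
        (μ {x | ((n + 1 : ℕ) : ℕ∞) < firstHitting T M x}).toReal := by
    rw [measure_setOf_lt_firstHitting_eq hT hM n,
      ENNReal.toReal_add (measure_ne_top _ _) (measure_ne_top _ _)]
  rw [integral_comp_iterate_cond_eq hT hM hf.aestronglyMeasurable hf0 hn1, hsplit]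
  grw [abs_inv_one_sub_mul_sub_le ENNReal.toReal_nonneg
    (ENNReal.toReal_le_of_le_ofReal (by norm_num) hhalf.le) ENNReal.toReal_nonneg, ← hsplit,
    sq_measure_add_measure_inter_le hT hM hfin hC.le hα₀ htail hn1, hIK]
  exact (by ring : _ = _).le
end
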